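/- Let (X, μ) and (Y, ν) be standard probability spaces. For every measurable function f : X × Y → ℝ the following inequalities hold: (1/4) ‖f‖_{SR¹} ≤ ∫_0^∞ thi({ (x,y) : |f(x,y)| ≥ λ }) dλ ≤ 2 ‖f‖_{SR¹}. -/

import Mathlib

open MeasureTheory Set
open scoped ENNReal

namespace VirtCont

variable {X Y : Type*}

/-- A semimetric on a set `S`. -/
def IsSemimetricOn (ρ : X → X → ℝ) (S : Set X) : Prop :=
  (∀ x ∈ S, ∀ y ∈ S, 0 ≤ ρ x y) ∧ (∀ x ∈ S, ρ x x = 0) ∧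
  (∀ x ∈ S, ∀ y ∈ S, ρ x y = ρ y x) ∧
  (∀ x ∈ S, ∀ y ∈ S, ∀ z ∈ S, ρ x z ≤ ρ x y + ρ y z)

/-- Separability of the semimetric space `(S, ρ)`. -/
def SepOn (ρ : X → X → ℝ) (S : Set X) : Prop :=
  ∃ D : Set X, D ⊆ S ∧ D.Countable ∧ ∀ x ∈ S, ∀ ε : ℝ, 0 < ε → ∃ d ∈ D, ρ x d < ε

/-- An admissible semimetric on `(S, μ|_S)`: a semimetric on `S`, measurable as a function
of two variables, for which some subset of `S` of full measure in `S` is separable. -/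
def IsAdmissibleSemimetricOn [MeasurableSpace X] (μ : Measure X) (S : Set X)
    (ρ : X → X → ℝ) : Prop :=
  IsSemimetricOn ρ S ∧
  Measurable (fun p : S × S => ρ (p.1 : X) (p.2 : X)) ∧
  ∃ X₀ : Set X, X₀ ⊆ S ∧ MeasurableSet X₀ ∧ μ (S \ X₀) = 0 ∧ SepOn ρ X₀

/-- An admissible semimetric on the whole space `(X, μ)`. -/
def IsAdmissibleSemimetric [MeasurableSpace X] (μ : Measure X) (ρ : X → X → ℝ) : Prop :=
  IsSemimetricOn ρ univ ∧
  Measurable (fun p : X × X => ρ p.1 p.2) ∧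
  ∃ X₀ : Set X, MeasurableSet X₀ ∧ μ X₀ = 1 ∧ SepOn ρ X₀

/-- An admissible metric on `(X, μ)`. -/
def IsAdmissibleMetric [MeasurableSpace X] (μ : Measure X) (ρ : X → X → ℝ) : Prop :=
  IsAdmissibleSemimetric μ ρ ∧ ∀ x y : X, ρ x y = 0 → x = y

/-- Continuity of `f` on `A ×ˢ B` with respect to the product of the (semi)metric
topologies of `ρX` and `ρY`. -/
def ContOnProd (ρX : X → X → ℝ) (ρY : Y → Y → ℝ) (A : Set X) (B : Set Y)
    (f : X × Y → ℝ) : Prop :=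
  ∀ x ∈ A, ∀ y ∈ B, ∀ ε : ℝ, 0 < ε → ∃ δ : ℝ, 0 < δ ∧
    ∀ x' ∈ A, ∀ y' ∈ B, ρX x x' < δ → ρY y y' < δ → |f (x, y) - f (x', y')| < ε

variable [MeasurableSpace X] [MeasurableSpace Y]

/-- A properly virtually continuous function of two variables. -/
def ProperlyVirtuallyContinuous (μ : Measure X) (ν : Measure Y) (f : X × Y → ℝ) : Prop :=
  Measurable f ∧
  ∀ ε : ℝ, 0 < ε → ∃ (X' : Set X) (Y' : Set Y),
    MeasurableSet X' ∧ MeasurableSet Y' ∧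
    1 - ENNReal.ofReal ε ≤ μ X' ∧ 1 - ENNReal.ofReal ε ≤ ν Y' ∧
    ∃ ρX : X → X → ℝ, ∃ ρY : Y → Y → ℝ,
      IsAdmissibleSemimetricOn μ X' ρX ∧ IsAdmissibleSemimetricOn ν Y' ρY ∧
      ContOnProd ρX ρY X' Y' f

/-- A virtually continuous function: one which agrees almost everywhere with a
properly virtually continuous function. -/
def VirtuallyContinuous (μ : Measure X) (ν : Measure Y) (f : X × Y → ℝ) : Prop :=
  Measurable f ∧ ∃ g : X × Y → ℝ,
    ProperlyVirtuallyContinuous μ ν g ∧ f =ᵐ[μ.prod ν] g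

/-- A virtually open subset of a product of measure spaces. -/
def VirtuallyOpen (μ : Measure X) (ν : Measure Y) (Z : Set (X × Y)) : Prop :=
  ∃ (X' : Set X) (Y' : Set Y), MeasurableSet X' ∧ MeasurableSet Y' ∧
    μ X' = 1 ∧ ν Y' = 1 ∧
    ∃ (A : ℕ → Set X) (B : ℕ → Set Y),
      (∀ n, MeasurableSet (A n)) ∧ (∀ n, MeasurableSet (B n)) ∧
      Z ∩ (X' ×ˢ Y') = ⋃ n, (A n) ×ˢ (B n)

/-- A virtually closed subset of a product of measure spaces. -/
def VirtuallyClosed (μ : Measure X) (ν : Measure Y) (Z : Set (X × Y)) : Prop :=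
  VirtuallyOpen μ ν Zᶜ

/-- Proper thickness of a subset of a product of measure spaces. -/
noncomputable def sthi (μ : Measure X) (ν : Measure Y) (Z : Set (X × Y)) : ℝ≥0∞ :=
  ⨅ (A : Set X) (B : Set Y) (_ : MeasurableSet A) (_ : MeasurableSet B)
    (_ : Z ⊆ (A ×ˢ (univ : Set Y)) ∪ ((univ : Set X) ×ˢ B)), μ A + ν B

/-- Thickness of a subset of a product of measure spaces. -/
noncomputable def thi (μ : Measure X) (ν : Measure Y) (Z : Set (X × Y)) : ℝ≥0∞ :=
  ⨅ (A : Set X) (B : Set Y) (_ : MeasurableSet A) (_ : MeasurableSet B)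
    (_ : (μ.prod ν) (Z \ ((A ×ˢ (univ : Set Y)) ∪ ((univ : Set X) ×ˢ B))) = 0), μ A + ν B

/-- The distance `τ` between two measurable functions on a product space. -/
noncomputable def tauDist (μ : Measure X) (ν : Measure Y) (f g : X × Y → ℝ) : ℝ :=
  sInf {ε : ℝ | 0 < ε ∧ thi μ ν {p : X × Y | ε < |f p - g p|} ≤ ENNReal.ofReal ε}

/-- The `SR¹`-norm of a measurable function on a product space. -/
noncomputable def srNorm (μ : Measure X) (ν : Measure Y) (f : X × Y → ℝ) : ℝ≥0∞ :=
  ⨅ (a : X → ℝ) (b : Y → ℝ) (_ : Measurable a) (_ : Measurable b)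
    (_ : ∀ x, 0 ≤ a x) (_ : ∀ y, 0 ≤ b y)
    (_ : ∀ᵐ p ∂μ.prod ν, |f p| ≤ a p.1 + b p.2),
    (∫⁻ x, ENNReal.ofReal (a x) ∂μ) + (∫⁻ y, ENNReal.ofReal (b y) ∂ν)



section Helpers

lemma thi_le (μ : Measure X) (ν : Measure Y) {Z : Set (X × Y)} {A : Set X} {B : Set Y}
    (hA : MeasurableSet A) (hB : MeasurableSet B)
    (h : (μ.prod ν) (Z \ ((A ×ˢ (univ : Set Y)) ∪ ((univ : Set X) ×ˢ B))) = 0) :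
    thi μ ν Z ≤ μ A + ν B := by
  refine iInf_le_of_le A (iInf_le_of_le B ?_)
  exact iInf_le_of_le hA (iInf_le_of_le hB (iInf_le_of_le h le_rfl))

lemma thi_mono' (μ : Measure X) (ν : Measure Y) {Z Z' : Set (X × Y)} (h : Z ⊆ Z') :
    thi μ ν Z ≤ thi μ ν Z' := by
  refine le_iInf fun A => le_iInf fun B => le_iInf fun hA => le_iInf fun hB => le_iInf fun h0 => ?_
  exact thi_le μ ν hA hB (measure_mono_null (diff_subset_diff_left h) h0)

lemma thi_ne_top (μ : Measure X) (ν : Measure Y) [IsProbabilityMeasure μ] {Z : Set (X × Y)} :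
    thi μ ν Z ≠ ⊤ := by
  have := thi_le (Z := Z) μ ν MeasurableSet.univ MeasurableSet.empty (by simp)
  simp only [measure_univ, measure_empty, add_zero] at this
  exact ne_top_of_le_ne_top ENNReal.one_ne_top this

lemma exists_covers (μ : Measure X) (ν : Measure Y) [IsProbabilityMeasure μ]
    {Z : Set (X × Y)} {c : ℝ≥0∞} (hc : c ≠ 0) :
    ∃ A B, MeasurableSet A ∧ MeasurableSet B ∧
      (μ.prod ν) (Z \ ((A ×ˢ (univ : Set Y)) ∪ ((univ : Set X) ×ˢ B))) = 0 ∧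
      μ A + ν B ≤ thi μ ν Z + c := by
  set d := thi μ ν Z + c with hd
  have h1 : thi μ ν Z < d := ENNReal.lt_add_right (thi_ne_top μ ν) hc
  simp only [thi, iInf_lt_iff] at h1
  obtain ⟨A, B, hA, hB, h0, hlt⟩ := h1
  exact ⟨A, B, hA, hB, h0, hlt.le⟩

lemma geom_sum' : ∑' k : ℕ, ((2 : ℝ≥0∞)⁻¹) ^ (k + 1) = 1 := by
  simp only [pow_succ]
  rw [ENNReal.tsum_mul_right, ENNReal.tsum_geometric]
  rw [ENNReal.one_sub_inv_two]
  rw [inv_inv]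
  exact ENNReal.mul_inv_cancel (by norm_num) (by norm_num)

lemma thi_measurable (μ : Measure X) (ν : Measure Y) (f : X × Y → ℝ) :
    Measurable (fun l : ℝ => thi μ ν {p : X × Y | l ≤ |f p|}) := by
  apply Antitone.measurable
  intro s t hst
  exact thi_mono' μ ν fun p hp => le_trans hst hp

lemma tsum_thi_le (μ : Measure X) (ν : Measure Y) (f : X × Y → ℝ) {δ : ℝ} (hδ : 0 < δ) :
    ∑' k : ℕ, ENNReal.ofReal δ * thi μ ν {p : X × Y | ((k : ℝ) + 1) * δ ≤ |f p|} ≤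
      ∫⁻ l in Set.Ioi (0 : ℝ), thi μ ν {p : X × Y | l ≤ |f p|} := by
  have heach : ∀ k : ℕ, ENNReal.ofReal δ * thi μ ν {p : X × Y | ((k : ℝ) + 1) * δ ≤ |f p|} ≤
      ∫⁻ l in Set.Ioc ((k : ℝ) * δ) (((k : ℝ) + 1) * δ), thi μ ν {p : X × Y | l ≤ |f p|} := by
    intro k
    calc ENNReal.ofReal δ * thi μ ν {p : X × Y | ((k : ℝ) + 1) * δ ≤ |f p|}
        = thi μ ν {p : X × Y | ((k : ℝ) + 1) * δ ≤ |f p|} *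
            volume (Set.Ioc ((k : ℝ) * δ) (((k : ℝ) + 1) * δ)) := by
          rw [Real.volume_Ioc, mul_comm]
          ring_nf
      _ = ∫⁻ _ in Set.Ioc ((k : ℝ) * δ) (((k : ℝ) + 1) * δ),
            thi μ ν {p : X × Y | ((k : ℝ) + 1) * δ ≤ |f p|} := (setLIntegral_const _ _).symm
      _ ≤ _ := by
          refine setLIntegral_mono (thi_measurable μ ν f) fun l hl => ?_
          exact thi_mono' μ ν fun p hp => le_trans hl.2 hp
  have hdisj : Pairwise (Function.onFun Disjoint
      fun k : ℕ => Set.Ioc ((k : ℝ) * δ) (((k : ℝ) + 1) * δ)) := by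
    intro i j hij
    rw [Function.onFun, Set.Ioc_disjoint_Ioc]
    rcases hij.lt_or_gt with h | h
    · have : (i : ℝ) + 1 ≤ (j : ℝ) := by exact_mod_cast h
      calc min (((i:ℝ)+1)*δ) (((j:ℝ)+1)*δ) ≤ ((i:ℝ)+1)*δ := min_le_left _ _
        _ ≤ (j:ℝ)*δ := by nlinarith
        _ ≤ max ((i:ℝ)*δ) ((j:ℝ)*δ) := le_max_right _ _
    · have : (j : ℝ) + 1 ≤ (i : ℝ) := by exact_mod_cast h
      calc min (((i:ℝ)+1)*δ) (((j:ℝ)+1)*δ) ≤ ((j:ℝ)+1)*δ := min_le_right _ _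
        _ ≤ (i:ℝ)*δ := by nlinarith
        _ ≤ max ((i:ℝ)*δ) ((j:ℝ)*δ) := le_max_left _ _
  calc ∑' k : ℕ, ENNReal.ofReal δ * thi μ ν {p : X × Y | ((k : ℝ) + 1) * δ ≤ |f p|}
      ≤ ∑' k : ℕ, ∫⁻ l in Set.Ioc ((k : ℝ) * δ) (((k : ℝ) + 1) * δ),
          thi μ ν {p : X × Y | l ≤ |f p|} := ENNReal.tsum_le_tsum heach
    _ = ∫⁻ l in ⋃ k : ℕ, Set.Ioc ((k : ℝ) * δ) (((k : ℝ) + 1) * δ),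
          thi μ ν {p : X × Y | l ≤ |f p|} :=
        (lintegral_iUnion (fun _ => measurableSet_Ioc) hdisj _).symm
    _ ≤ _ := by
        refine lintegral_mono_set (Set.iUnion_subset fun k l hl => ?_)
        have : (0:ℝ) ≤ (k : ℝ) * δ := mul_nonneg (Nat.cast_nonneg k) hδ.le
        exact Set.mem_Ioi.mpr (lt_of_le_of_lt this hl.1)

lemma key_upper (μ : Measure X) (ν : Measure Y) [SFinite ν]
    (f : X × Y → ℝ) (a : X → ℝ) (b : Y → ℝ)
    (ha : Measurable a) (hb : Measurable b) (hna : ∀ x, 0 ≤ a x) (hnb : ∀ y, 0 ≤ b y)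
    (hae : ∀ᵐ p ∂μ.prod ν, |f p| ≤ a p.1 + b p.2) :
    (∫⁻ l in Set.Ioi (0 : ℝ), thi μ ν {p : X × Y | l ≤ |f p|}) ≤
      2 * ((∫⁻ x, ENNReal.ofReal (a x) ∂μ) + (∫⁻ y, ENNReal.ofReal (b y) ∂ν)) := by
  have hptw : ∀ l : ℝ, thi μ ν {p : X × Y | l ≤ |f p|} ≤
      μ {x | l ≤ 2 * a x} + ν {y | l ≤ 2 * b y} := by
    intro l
    refine thi_le μ ν (measurableSet_le measurable_const (ha.const_mul 2))
      (measurableSet_le measurable_const (hb.const_mul 2)) ?_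
    have hsub : {p : X × Y | l ≤ |f p|} \
        (({x | l ≤ 2 * a x} ×ˢ (univ : Set Y)) ∪ ((univ : Set X) ×ˢ {y | l ≤ 2 * b y})) ⊆
        {p : X × Y | ¬ (|f p| ≤ a p.1 + b p.2)} := by
      rintro p ⟨hp, hnc⟩
      simp only [Set.mem_union, Set.mem_prod, Set.mem_univ, and_true, true_and,
        Set.mem_setOf_eq, not_or, not_le] at hnc ⊢
      have h1 : 2 * a p.1 < l := hnc.1
      have h2 : 2 * b p.2 < l := hnc.2
      have := hp
      simp only [Set.mem_setOf_eq] at this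
      linarith
    refine measure_mono_null hsub ?_
    simpa [ae_iff] using hae
  have hmono : (∫⁻ l in Set.Ioi (0 : ℝ), thi μ ν {p : X × Y | l ≤ |f p|}) ≤
      ∫⁻ l in Set.Ioi (0 : ℝ), (μ {x | l ≤ 2 * a x} + ν {y | l ≤ 2 * b y}) :=
    lintegral_mono fun l => hptw l
  have hmeas1 : Measurable (fun l : ℝ => μ {x | l ≤ 2 * a x}) := by
    apply Antitone.measurable
    intro s t hst
    exact measure_mono fun x hx => le_trans hst hx
  have hadd : (∫⁻ l in Set.Ioi (0 : ℝ), (μ {x | l ≤ 2 * a x} + ν {y | l ≤ 2 * b y})) =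
      (∫⁻ l in Set.Ioi (0 : ℝ), μ {x | l ≤ 2 * a x}) +
      (∫⁻ l in Set.Ioi (0 : ℝ), ν {y | l ≤ 2 * b y}) :=
    lintegral_add_left hmeas1 _
  have hlc1 : (∫⁻ l in Set.Ioi (0 : ℝ), μ {x | l ≤ 2 * a x}) =
      ∫⁻ x, ENNReal.ofReal (2 * a x) ∂μ :=
    (lintegral_eq_lintegral_meas_le μ (ae_of_all _ fun x => mul_nonneg (by norm_num) (hna x))
      ((ha.const_mul 2).aemeasurable)).symm
  have hlc2 : (∫⁻ l in Set.Ioi (0 : ℝ), ν {y | l ≤ 2 * b y}) =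
      ∫⁻ y, ENNReal.ofReal (2 * b y) ∂ν :=
    (lintegral_eq_lintegral_meas_le ν (ae_of_all _ fun y => mul_nonneg (by norm_num) (hnb y))
      ((hb.const_mul 2).aemeasurable)).symm
  have h2a : (∫⁻ x, ENNReal.ofReal (2 * a x) ∂μ) = 2 * ∫⁻ x, ENNReal.ofReal (a x) ∂μ := by
    rw [← lintegral_const_mul 2 ha.ennreal_ofReal]
    congr 1; ext x
    rw [ENNReal.ofReal_mul (by norm_num)]; norm_num
  have h2b : (∫⁻ y, ENNReal.ofReal (2 * b y) ∂ν) = 2 * ∫⁻ y, ENNReal.ofReal (b y) ∂ν := by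
    rw [← lintegral_const_mul 2 hb.ennreal_ofReal]
    congr 1; ext y
    rw [ENNReal.ofReal_mul (by norm_num)]; norm_num
  calc (∫⁻ l in Set.Ioi (0 : ℝ), thi μ ν {p : X × Y | l ≤ |f p|})
      ≤ _ := hmono
    _ = _ := hadd
    _ = 2 * ((∫⁻ x, ENNReal.ofReal (a x) ∂μ) + (∫⁻ y, ENNReal.ofReal (b y) ∂ν)) := by
        rw [hlc1, hlc2, h2a, h2b, mul_add]

lemma key_lower (μ : Measure X) (ν : Measure Y)
    [IsProbabilityMeasure μ] [IsProbabilityMeasure ν] (f : X × Y → ℝ) :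
    srNorm μ ν f ≤ ∫⁻ l in Set.Ioi (0 : ℝ), thi μ ν {p : X × Y | l ≤ |f p|} := by
  set I := ∫⁻ l in Set.Ioi (0 : ℝ), thi μ ν {p : X × Y | l ≤ |f p|} with hI
  refine ENNReal.le_of_forall_pos_le_add fun ε hε hIlt => ?_
  set δ : ℝ := (ε : ℝ) / 4 with hδdef
  have hδ : 0 < δ := by positivity
  have key : ∀ k : ℕ, ∃ A B, MeasurableSet A ∧ MeasurableSet B ∧
      (μ.prod ν) ({p : X × Y | ((k : ℝ) + 1) * δ ≤ |f p|} \
        ((A ×ˢ (univ : Set Y)) ∪ ((univ : Set X) ×ˢ B))) = 0 ∧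
      μ A + ν B ≤ thi μ ν {p : X × Y | ((k : ℝ) + 1) * δ ≤ |f p|} + 2⁻¹ ^ (k + 1) :=
    fun k => exists_covers μ ν (pow_ne_zero _ (ENNReal.inv_ne_zero.mpr (by norm_num)))
  choose A B hA hB hnull hle using key
  set at' : X → ℝ≥0∞ := fun x => ENNReal.ofReal δ +
    ∑' k : ℕ, Set.indicator (A k) (fun _ => ENNReal.ofReal δ) x with hat'
  set bt' : Y → ℝ≥0∞ := fun y =>
    ∑' k : ℕ, Set.indicator (B k) (fun _ => ENNReal.ofReal δ) y with hbt'
  have hatm : Measurable at' :=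
    (Measurable.ennreal_tsum fun k => measurable_const.indicator (hA k)).const_add _
  have hbtm : Measurable bt' :=
    Measurable.ennreal_tsum fun k => measurable_const.indicator (hB k)
  have hinta : (∫⁻ x, at' x ∂μ) = ENNReal.ofReal δ + ∑' k : ℕ, ENNReal.ofReal δ * μ (A k) := by
    rw [hat']
    rw [lintegral_add_left measurable_const, lintegral_const, measure_univ, mul_one]
    congr 1
    rw [lintegral_tsum fun k => (measurable_const.indicator (hA k)).aemeasurable]
    exact tsum_congr fun k => lintegral_indicator_const (hA k) _
  have hintb : (∫⁻ y, bt' y ∂ν) = ∑' k : ℕ, ENNReal.ofReal δ * ν (B k) := by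
    rw [hbt']
    rw [lintegral_tsum fun k => (measurable_const.indicator (hB k)).aemeasurable]
    exact tsum_congr fun k => lintegral_indicator_const (hB k) _
  have hsum : (∫⁻ x, at' x ∂μ) + (∫⁻ y, bt' y ∂ν) ≤ I + 2 * ENNReal.ofReal δ := by
    rw [hinta, hintb, add_assoc, ← ENNReal.tsum_add]
    have h1 : ∑' k : ℕ, (ENNReal.ofReal δ * μ (A k) + ENNReal.ofReal δ * ν (B k)) ≤
        I + ENNReal.ofReal δ := by
      calc ∑' k : ℕ, (ENNReal.ofReal δ * μ (A k) + ENNReal.ofReal δ * ν (B k))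
          = ∑' k : ℕ, ENNReal.ofReal δ * (μ (A k) + ν (B k)) := by
            exact tsum_congr fun k => (mul_add _ _ _).symm
        _ ≤ ∑' k : ℕ, ENNReal.ofReal δ *
              (thi μ ν {p : X × Y | ((k : ℝ) + 1) * δ ≤ |f p|} + 2⁻¹ ^ (k + 1)) :=
            ENNReal.tsum_le_tsum fun k => mul_le_mul_right (hle k) _
        _ = (∑' k : ℕ, ENNReal.ofReal δ * thi μ ν {p : X × Y | ((k : ℝ) + 1) * δ ≤ |f p|}) +
              ENNReal.ofReal δ * ∑' k : ℕ, ((2 : ℝ≥0∞)⁻¹) ^ (k + 1) := by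
            rw [← ENNReal.tsum_mul_left, ← ENNReal.tsum_add]
            exact tsum_congr fun k => mul_add _ _ _
        _ ≤ I + ENNReal.ofReal δ * 1 := by
            gcongr
            · exact tsum_thi_le μ ν f hδ
            · exact le_of_eq geom_sum'
        _ = I + ENNReal.ofReal δ := by rw [mul_one]
    calc ENNReal.ofReal δ + ∑' k : ℕ, (ENNReal.ofReal δ * μ (A k) + ENNReal.ofReal δ * ν (B k))
        ≤ ENNReal.ofReal δ + (I + ENNReal.ofReal δ) := add_le_add_right h1 _
      _ = I + 2 * ENNReal.ofReal δ := by ring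
  have hfin : (∫⁻ x, at' x ∂μ) ≠ ⊤ := by
    refine ne_top_of_le_ne_top ?_ (le_trans (le_add_right le_rfl (a := ∫⁻ x, at' x ∂μ)) hsum)
    exact ENNReal.add_ne_top.mpr ⟨hIlt.ne, ENNReal.mul_ne_top (by norm_num) ENNReal.ofReal_ne_top⟩
  have hfinb : (∫⁻ y, bt' y ∂ν) ≠ ⊤ := by
    refine ne_top_of_le_ne_top ?_ (le_trans (le_add_left le_rfl) hsum)
    exact ENNReal.add_ne_top.mpr ⟨hIlt.ne, ENNReal.mul_ne_top (by norm_num) ENNReal.ofReal_ne_top⟩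
  have hafin : ∀ᵐ x ∂μ, at' x ≠ ⊤ := by
    filter_upwards [ae_lt_top hatm hfin] with x hx using hx.ne
  have hbfin : ∀ᵐ y ∂ν, bt' y ≠ ⊤ := by
    filter_upwards [ae_lt_top hbtm hfinb] with y hy using hy.ne
  have hafinp : ∀ᵐ p ∂μ.prod ν, at' p.1 ≠ ⊤ := by
    have : (μ.prod ν) ({x | ¬ at' x ≠ ⊤} ×ˢ (univ : Set Y)) = 0 := by
      rw [Measure.prod_prod]
      have : μ {x | ¬ at' x ≠ ⊤} = 0 := hafin
      rw [this, zero_mul]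
    refine measure_mono_null (fun p hp => ?_) this
    exact ⟨hp, Set.mem_univ _⟩
  have hbfinp : ∀ᵐ p ∂μ.prod ν, bt' p.2 ≠ ⊤ := by
    have : (μ.prod ν) ((univ : Set X) ×ˢ {y | ¬ bt' y ≠ ⊤}) = 0 := by
      rw [Measure.prod_prod]
      have : ν {y | ¬ bt' y ≠ ⊤} = 0 := hbfin
      rw [this, mul_zero]
    refine measure_mono_null (fun p hp => ?_) this
    exact ⟨Set.mem_univ _, hp⟩
  have hcov : ∀ᵐ p ∂μ.prod ν, ∀ k : ℕ,
      ((k : ℝ) + 1) * δ ≤ |f p| → p.1 ∈ A k ∨ p.2 ∈ B k := by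
    rw [ae_all_iff]
    intro k
    rw [ae_iff]
    refine measure_mono_null (fun p hp => ?_) (hnull k)
    simp only [Set.mem_setOf_eq] at hp
    push_neg at hp
    refine ⟨hp.1, fun hc => ?_⟩
    rcases hc with h | h
    · exact hp.2.1 h.1
    · exact hp.2.2 h.2
  have hptw : ∀ᵐ p ∂μ.prod ν, |f p| ≤ (at' p.1).toReal + (bt' p.2).toReal := by
    filter_upwards [hcov, hafinp, hbfinp] with p hp hpa hpb
    set t := |f p| with ht
    have ht0 : 0 ≤ t := abs_nonneg _
    set N : ℕ := Nat.floor (t / δ) with hN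
    have hofR : ENNReal.ofReal t ≤ at' p.1 + bt' p.2 := by
      have htle : t ≤ δ + (N : ℝ) * δ := by
        have h2 : t / δ < (N : ℝ) + 1 := by exact_mod_cast Nat.lt_floor_add_one (t / δ)
        nlinarith [(div_lt_iff₀ hδ).mp h2]
      have hNδ : (N : ℝ) * δ ≤ t := by
        have := Nat.floor_le (div_nonneg ht0 hδ.le)
        calc (N : ℝ) * δ ≤ (t / δ) * δ := by nlinarith
          _ = t := div_mul_cancel₀ t hδ.ne'
      calc ENNReal.ofReal t ≤ ENNReal.ofReal (δ + (N : ℝ) * δ) := ENNReal.ofReal_le_ofReal htle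
        _ = ENNReal.ofReal δ + (N : ℕ) * ENNReal.ofReal δ := by
            rw [ENNReal.ofReal_add hδ.le (mul_nonneg (Nat.cast_nonneg N) hδ.le),
              ENNReal.ofReal_mul (Nat.cast_nonneg N), ENNReal.ofReal_natCast]
        _ = ENNReal.ofReal δ + ∑ k ∈ Finset.range N, ENNReal.ofReal δ := by
            rw [Finset.sum_const, Finset.card_range, nsmul_eq_mul]
        _ ≤ ENNReal.ofReal δ + ∑ k ∈ Finset.range N,
              (Set.indicator (A k) (fun _ => ENNReal.ofReal δ) p.1 +
               Set.indicator (B k) (fun _ => ENNReal.ofReal δ) p.2) := by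
            refine add_le_add_right (Finset.sum_le_sum fun k hk => ?_) _
            have hkN : (k : ℝ) + 1 ≤ (N : ℝ) := by
              exact_mod_cast Nat.succ_le_of_lt (Finset.mem_range.mp hk)
            have : ((k : ℝ) + 1) * δ ≤ t := le_trans (by nlinarith) hNδ
            rcases hp k this with hx | hy
            · rw [Set.indicator_of_mem hx]
              exact le_add_right le_rfl
            · rw [Set.indicator_of_mem hy]
              exact le_add_left le_rfl
        _ ≤ ENNReal.ofReal δ +
              ((∑' k : ℕ, Set.indicator (A k) (fun _ => ENNReal.ofReal δ) p.1) +
               (∑' k : ℕ, Set.indicator (B k) (fun _ => ENNReal.ofReal δ) p.2)) := by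
            refine add_le_add_right ?_ _
            rw [Finset.sum_add_distrib]
            exact add_le_add (ENNReal.sum_le_tsum _) (ENNReal.sum_le_tsum _)
        _ = at' p.1 + bt' p.2 := by rw [hat', hbt']; ring
    calc t = (ENNReal.ofReal t).toReal := (ENNReal.toReal_ofReal ht0).symm
      _ ≤ (at' p.1 + bt' p.2).toReal :=
          ENNReal.toReal_mono (ENNReal.add_ne_top.mpr ⟨hpa, hpb⟩) hofR
      _ = (at' p.1).toReal + (bt' p.2).toReal := ENNReal.toReal_add hpa hpb
  have hsr : srNorm μ ν f ≤
      (∫⁻ x, ENNReal.ofReal ((at' x).toReal) ∂μ) + (∫⁻ y, ENNReal.ofReal ((bt' y).toReal) ∂ν) := by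
    refine iInf_le_of_le (fun x => (at' x).toReal) (iInf_le_of_le (fun y => (bt' y).toReal) ?_)
    refine iInf_le_of_le (ENNReal.measurable_toReal.comp hatm) ?_
    refine iInf_le_of_le (ENNReal.measurable_toReal.comp hbtm) ?_
    refine iInf_le_of_le (fun x => ENNReal.toReal_nonneg) ?_
    refine iInf_le_of_le (fun y => ENNReal.toReal_nonneg) ?_
    exact iInf_le_of_le hptw le_rfl
  have hback : (∫⁻ x, ENNReal.ofReal ((at' x).toReal) ∂μ) +
      (∫⁻ y, ENNReal.ofReal ((bt' y).toReal) ∂ν) ≤ (∫⁻ x, at' x ∂μ) + (∫⁻ y, bt' y ∂ν) :=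
    add_le_add (lintegral_mono fun x => ENNReal.ofReal_toReal_le)
      (lintegral_mono fun y => ENNReal.ofReal_toReal_le)
  have hfinal : 2 * ENNReal.ofReal δ ≤ (ε : ℝ≥0∞) := by
    rw [hδdef]
    calc (2 : ℝ≥0∞) * ENNReal.ofReal ((ε : ℝ) / 4) =
        ENNReal.ofReal 2 * ENNReal.ofReal ((ε : ℝ) / 4) := by
          rw [ENNReal.ofReal_ofNat]
      _ = ENNReal.ofReal (2 * ((ε : ℝ) / 4)) := (ENNReal.ofReal_mul (by norm_num)).symm
      _ ≤ ENNReal.ofReal (ε : ℝ) := ENNReal.ofReal_le_ofReal (by nlinarith [hε.le])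
      _ = (ε : ℝ≥0∞) := ENNReal.ofReal_coe_nnreal
  calc srNorm μ ν f ≤ _ := hsr
    _ ≤ _ := hback
    _ ≤ I + 2 * ENNReal.ofReal δ := hsum
    _ ≤ I + ε := add_le_add_right hfinal _

end Helpers

/-- for every measurable `f` on `X × Y`,
`(1/4) ‖f‖_{SR¹} ≤ ∫₀^∞ thi{|f| ≥ λ} dλ ≤ 2 ‖f‖_{SR¹}`. -/
theorem srNorm_thickness_estimates
    [StandardBorelSpace X] [StandardBorelSpace Y]
    (μ : Measure X) (ν : Measure Y)
    [IsProbabilityMeasure μ] [IsProbabilityMeasure ν] [NullSingletonClass μ] [NullSingletonClass ν]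
    (f : X × Y → ℝ) (hf : Measurable f) :
    (1 / 4 : ℝ≥0∞) * srNorm μ ν f ≤
        (∫⁻ l in Set.Ioi (0 : ℝ), thi μ ν {p : X × Y | l ≤ |f p|}) ∧
    (∫⁻ l in Set.Ioi (0 : ℝ), thi μ ν {p : X × Y | l ≤ |f p|}) ≤ 2 * srNorm μ ν f := by
  constructor
  · calc (1 / 4 : ℝ≥0∞) * srNorm μ ν f ≤ 1 * srNorm μ ν f :=
        mul_le_mul_left (by norm_num) _
      _ = srNorm μ ν f := one_mul _
      _ ≤ _ := key_lower μ ν f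
  · by_cases h : srNorm μ ν f = ⊤
    · rw [h]
      simp
    refine ENNReal.le_of_forall_pos_le_add fun ε hε h2 => ?_
    have hε2 : ((ε : ℝ≥0∞) / 2) ≠ 0 := by
      simp [ENNReal.div_eq_zero_iff, hε.ne']
    set c := srNorm μ ν f + (ε : ℝ≥0∞) / 2 with hc
    have hlt : srNorm μ ν f < c := ENNReal.lt_add_right h hε2
    simp only [srNorm, iInf_lt_iff] at hlt
    obtain ⟨a, b, ha, hb, hna, hnb, hae, hlt2⟩ := hlt
    calc (∫⁻ l in Set.Ioi (0 : ℝ), thi μ ν {p : X × Y | l ≤ |f p|})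
        ≤ 2 * ((∫⁻ x, ENNReal.ofReal (a x) ∂μ) + (∫⁻ y, ENNReal.ofReal (b y) ∂ν)) :=
          key_upper μ ν f a b ha hb hna hnb hae
      _ ≤ 2 * c := mul_le_mul_right hlt2.le 2
      _ = 2 * srNorm μ ν f + ε := by
          rw [hc, mul_add, ENNReal.mul_div_cancel' (by norm_num) (by norm_num)]


end VirtCont
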